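/- arXiv:math/0410158 — 2 statements merged into one kernel-verified Lean document; each statement's English description precedes it below -/
import Mathlib

section
/- For any $k = (k_1,k_2) \in \mathbb{Z}^2$ with $|k| \geq 2$, the series $\sum_{h \in \mathbb{Z}^2, h \neq 0, h \neq k} \frac{1}{|h|^2 |k-h|^2}$ is bounded above by $c \frac{\log |k|}{|k|^2}$ for some absolute constant $c > 0$ independent of $k$. -/
open scoped Real

/-- Euclidean norm of a lattice point. -/
noncomputable def znorm (k : ℤ × ℤ) : ℝ := Real.sqrt ((k.1 : ℝ)^2 + (k.2 : ℝ)^2)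

/-!
Write `a = |h|`, `b = |k - h|`, `K = |k|`. Since `a + b ≥ K`, one of `a`, `b` is at least `K / 2`.
If `a ≤ 2K`, both are at most `3K`, so the term is at most `4 K⁻²` times `a⁻²` or `b⁻²` over the
ball of radius `3K`; if `a > 2K`, then `b ≥ a / 2` and the term is at most `4 a⁻⁴`. Summing over
the sup-norm shells, which carry `8n` lattice points each, gives `∑_{0 < |h| ≤ R} |h|⁻² ≤ 8 (1 + log R)`
through the harmonic numbers and `∑_{|h| > K} |h|⁻⁴ ≤ 64 / K²`.
-/

open Finset

def toComplex (h : ℤ × ℤ) : ℂ := ⟨h.1, h.2⟩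

lemma znorm_eq_norm_toComplex (h : ℤ × ℤ) : znorm h = ‖toComplex h‖ := by
  simp [znorm, toComplex, Complex.norm_def, Complex.normSq_mk, sq]

lemma toComplex_sub (h k : ℤ × ℤ) : toComplex (h - k) = toComplex h - toComplex k := by
  apply Complex.ext <;> simp [toComplex]

lemma znorm_zero : znorm 0 = 0 := by simp [znorm]

lemma znorm_sub_le (h k : ℤ × ℤ) : znorm (h - k) ≤ znorm h + znorm k := by
  simpa only [znorm_eq_norm_toComplex, toComplex_sub] using norm_sub_le _ _

lemma znorm_le_znorm_add_znorm_sub (h k : ℤ × ℤ) : znorm h ≤ znorm k + znorm (h - k) := by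
  simpa only [znorm_eq_norm_toComplex, toComplex_sub] using norm_le_norm_add_norm_sub' _ _

def supNorm (h : ℤ × ℤ) : ℕ := max h.1.natAbs h.2.natAbs

lemma one_le_supNorm {h : ℤ × ℤ} (hh : h ≠ 0) : 1 ≤ supNorm h := by
  rw [Nat.one_le_iff_ne_zero]
  intro h0
  obtain ⟨h1, h2⟩ := Nat.max_eq_zero_iff.mp h0
  exact hh (Prod.ext (Int.natAbs_eq_zero.mp h1) (Int.natAbs_eq_zero.mp h2))

lemma cast_supNorm (h : ℤ × ℤ) : (supNorm h : ℝ) = max |(h.1 : ℝ)| |(h.2 : ℝ)| := by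
  simp [supNorm, Nat.cast_natAbs]

lemma supNorm_le_znorm (h : ℤ × ℤ) : (supNorm h : ℝ) ≤ znorm h := by
  rw [cast_supNorm, znorm_eq_norm_toComplex]
  exact max_le (Complex.abs_re_le_norm (toComplex h)) (Complex.abs_im_le_norm (toComplex h))

lemma znorm_le_two_mul_supNorm (h : ℤ × ℤ) : znorm h ≤ 2 * supNorm h := by
  rw [cast_supNorm, znorm_eq_norm_toComplex]
  refine (Complex.norm_le_abs_re_add_abs_im (toComplex h)).trans ?_
  have := le_max_left |(h.1 : ℝ)| |(h.2 : ℝ)|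
  have := le_max_right |(h.1 : ℝ)| |(h.2 : ℝ)|
  simp only [toComplex]
  linarith

lemma one_le_znorm {h : ℤ × ℤ} (hh : h ≠ 0) : 1 ≤ znorm h :=
  le_trans (by exact_mod_cast one_le_supNorm hh) (supNorm_le_znorm h)

lemma summable_and_tsum_le_of_le_shell {f : ℤ × ℤ → ℝ} (hf : ∀ h, 0 ≤ f h) (hf0 : f 0 = 0)
    {w : ℕ → ℝ} (hfw : ∀ h ≠ 0, f h ≤ w (supNorm h)) {B : ℝ}
    (hB : ∀ N : ℕ, ∑ n ∈ Icc 1 N, 8 * (n : ℝ) * w n ≤ B) : Summable f ∧ ∑' h, f h ≤ B := by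
  have hfin : ∀ u : Finset (ℤ × ℤ), ∑ h ∈ u, f h ≤ B := by
    intro u
    have hmaps : ∀ h ∈ u.erase 0, supNorm h ∈ Icc 1 (u.sup supNorm) := fun h hh =>
      mem_Icc.mpr ⟨one_le_supNorm (ne_of_mem_erase hh), le_sup (mem_of_mem_erase hh)⟩
    calc ∑ h ∈ u, f h = ∑ h ∈ u.erase 0, f h := (sum_erase u hf0).symm
      _ = ∑ n ∈ Icc 1 (u.sup supNorm), ∑ h ∈ u.erase 0 with supNorm h = n, f h :=
        (sum_fiberwise_of_maps_to hmaps f).symm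
      _ ≤ ∑ n ∈ Icc 1 (u.sup supNorm), ∑ h ∈ (box n : Finset (ℤ × ℤ)), w n := by
        refine sum_le_sum fun n hnN => ?_
        calc ∑ h ∈ u.erase 0 with supNorm h = n, f h ≤ ∑ h ∈ (box n : Finset (ℤ × ℤ)), f h :=
              sum_le_sum_of_subset_of_nonneg
                (fun h hh => Int.mem_box.mpr (mem_filter.mp hh).2) (fun h _ _ => hf h)
          _ ≤ ∑ h ∈ (box n : Finset (ℤ × ℤ)), w n := sum_le_sum fun h hh => by
              have hn : supNorm h = n := Int.mem_box.mp hh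
              refine hn ▸ hfw h fun h0 => ?_
              simp only [h0, supNorm, Prod.fst_zero, Prod.snd_zero, Int.natAbs_zero, max_self] at hn
              grind
      _ = ∑ n ∈ Icc 1 (u.sup supNorm), 8 * (n : ℝ) * w n := by
        refine sum_congr rfl fun n hn => ?_
        rw [sum_const, Int.card_box (by grind), nsmul_eq_mul]
        push_cast
        ring
      _ ≤ B := hB _
  have hs := summable_of_sum_le hf hfin
  exact ⟨hs, hs.tsum_le_of_sum_le hfin⟩

noncomputable def nearTerm (R : ℝ) (h : ℤ × ℤ) : ℝ :=
  if h ≠ 0 ∧ znorm h ≤ R then (znorm h ^ 2)⁻¹ else 0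

noncomputable def farTerm (K : ℝ) (h : ℤ × ℤ) : ℝ :=
  if K < znorm h then (znorm h ^ 4)⁻¹ else 0

lemma nearTerm_nonneg (R : ℝ) (h : ℤ × ℤ) : 0 ≤ nearTerm R h := by
  unfold nearTerm; positivity

lemma farTerm_nonneg (K : ℝ) (h : ℤ × ℤ) : 0 ≤ farTerm K h := by
  unfold farTerm; positivity

lemma summable_nearTerm_and_tsum_le {R : ℝ} (hR : 1 ≤ R) :
    Summable (nearTerm R) ∧ ∑' h, nearTerm R h ≤ 8 * (1 + Real.log R) := by
  refine summable_and_tsum_le_of_le_shell (nearTerm_nonneg R) (by simp [nearTerm])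
    (w := fun n => if (n : ℝ) ≤ R then ((n : ℝ) ^ 2)⁻¹ else 0) (fun h hh => ?_) (fun N => ?_)
  · have hr : (0 : ℝ) < supNorm h := by exact_mod_cast one_le_supNorm hh
    have hrh := supNorm_le_znorm h
    unfold nearTerm
    split_ifs with hin hrR
    · gcongr
    · exact absurd (hrh.trans hin.2) hrR
    · positivity
    · exact le_rfl
  · calc ∑ n ∈ Icc 1 N, 8 * (n : ℝ) * (if (n : ℝ) ≤ R then ((n : ℝ) ^ 2)⁻¹ else 0)
          = ∑ n ∈ Icc 1 N with ((n : ℕ) : ℝ) ≤ R, 8 * (n : ℝ)⁻¹ := by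
            rw [sum_filter]
            refine sum_congr rfl fun n hn => ?_
            have : (n : ℝ) ≠ 0 := by have := (mem_Icc.mp hn).1; positivity
            split_ifs
            · field_simp
            · simp
      _ ≤ ∑ n ∈ Icc 1 ⌊R⌋₊, 8 * (n : ℝ)⁻¹ := by
            refine sum_le_sum_of_subset_of_nonneg (fun n hn => ?_) (fun n _ _ => by positivity)
            simp only [mem_filter, mem_Icc] at hn ⊢
            exact ⟨hn.1.1, Nat.le_floor hn.2⟩
      _ = 8 * harmonic ⌊R⌋₊ := by
            rw [← mul_sum, harmonic_eq_sum_Icc]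
            push_cast
            rfl
      _ ≤ 8 * (1 + Real.log R) := by
            gcongr
            refine (harmonic_le_one_add_log _).trans ?_
            gcongr
            · exact_mod_cast Nat.floor_pos.mpr hR
            · exact Nat.floor_le (by linarith)

lemma summable_farTerm_and_tsum_le {K : ℝ} (hK : 0 < K) :
    Summable (farTerm K) ∧ ∑' h, farTerm K h ≤ 64 / K ^ 2 := by
  refine summable_and_tsum_le_of_le_shell (farTerm_nonneg K)
    (by simp [farTerm, znorm_zero, hK.le.not_gt])
    (w := fun n => if K < 2 * n then ((n : ℝ) ^ 4)⁻¹ else 0) (fun h hh => ?_) (fun N => ?_)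
  · have hr : (0 : ℝ) < supNorm h := by exact_mod_cast one_le_supNorm hh
    have hrh := supNorm_le_znorm h
    have hhr := znorm_le_two_mul_supNorm h
    unfold farTerm
    split_ifs with hin hKr
    · gcongr
    · exact absurd (hin.trans_le hhr) hKr
    · positivity
    · exact le_rfl
  · set m := ⌊K / 2⌋₊
    have hm : K / 2 < m + 1 := Nat.lt_floor_add_one _
    have hm0 : (0 : ℝ) < m + 1 := by positivity
    calc ∑ n ∈ Icc 1 N, 8 * (n : ℝ) * (if K < 2 * n then ((n : ℝ) ^ 4)⁻¹ else 0)
          = ∑ n ∈ Icc 1 N with K < 2 * ((n : ℕ) : ℝ), 8 * ((n : ℝ) ^ 3)⁻¹ := by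
            rw [sum_filter]
            refine sum_congr rfl fun n hn => ?_
            have : (n : ℝ) ≠ 0 := by have := (mem_Icc.mp hn).1; positivity
            split_ifs
            · field_simp
            · simp
      _ ≤ ∑ n ∈ Ioo m (N + 1), 8 * ((n : ℝ) ^ 3)⁻¹ := by
            refine sum_le_sum_of_subset_of_nonneg (fun n hn => ?_) (fun n _ _ => by positivity)
            simp only [mem_filter, mem_Icc, mem_Ioo] at hn ⊢
            exact ⟨(Nat.floor_lt (by positivity)).mpr (by linarith), by omega⟩
      _ ≤ ∑ n ∈ Ioo m (N + 1), 8 / (m + 1) * ((n : ℝ) ^ 2)⁻¹ := by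
            refine sum_le_sum fun n hn => ?_
            have hmn : (m : ℝ) + 1 ≤ n := by exact_mod_cast (mem_Ioo.mp hn).1
            have hn0 : (0 : ℝ) < n := by linarith
            calc 8 * ((n : ℝ) ^ 3)⁻¹ = 8 / n * ((n : ℝ) ^ 2)⁻¹ := by field_simp
              _ ≤ 8 / (m + 1) * ((n : ℝ) ^ 2)⁻¹ := by gcongr
      _ = 8 / (m + 1) * ∑ n ∈ Ioo m (N + 1), ((n : ℝ) ^ 2)⁻¹ := (mul_sum _ _ _).symm
      _ ≤ 8 / (m + 1) * (2 / (m + 1)) := by gcongr; exact sum_Ioo_inv_sq_le _ _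
      _ ≤ 64 / K ^ 2 := by
            rw [div_mul_div_comm, div_le_div_iff₀ (by positivity) (by positivity)]
            nlinarith

lemma inv_sq_le_four_mul_inv_sq {x y : ℝ} (hx : 0 < x) (hxy : x ≤ 2 * y) :
    (y ^ 2)⁻¹ ≤ 4 * (x ^ 2)⁻¹ :=
  calc (y ^ 2)⁻¹ ≤ ((x / 2) ^ 2)⁻¹ := by gcongr; linarith
    _ = 4 * (x ^ 2)⁻¹ := by ring

noncomputable def convTerm (k h : ℤ × ℤ) : ℝ :=
  if h ≠ 0 ∧ h ≠ k then 1 / (znorm h ^ 2 * znorm (k - h) ^ 2) else 0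

lemma convTerm_nonneg (k h : ℤ × ℤ) : 0 ≤ convTerm k h := by
  unfold convTerm; positivity

lemma convTerm_le {k : ℤ × ℤ} (hk : k ≠ 0) (h : ℤ × ℤ) :
    convTerm k h ≤ 4 * (znorm k ^ 2)⁻¹ * (nearTerm (3 * znorm k) h + nearTerm (3 * znorm k) (k - h))
      + 4 * farTerm (znorm k) h := by
  have hnear := nearTerm_nonneg (3 * znorm k) h
  have hnear' := nearTerm_nonneg (3 * znorm k) (k - h)
  have hfar := farTerm_nonneg (znorm k) h
  have hK := one_le_znorm hk
  unfold convTerm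
  split_ifs with hc
  swap
  · positivity
  obtain ⟨h0, hhk⟩ := hc
  have hkh : k - h ≠ 0 := sub_ne_zero.mpr hhk.symm
  have hab := znorm_le_znorm_add_znorm_sub k h
  have hba := znorm_sub_le k h
  have hab' : znorm h ≤ znorm k + znorm (k - h) := by
    simpa only [sub_sub_cancel] using znorm_sub_le k (k - h)
  rw [one_div, mul_inv]
  rcases le_or_gt (znorm h) (2 * znorm k) with hsmall | hlarge
  · rcases le_or_gt (znorm k) (2 * znorm h) with hmid | hsmall'
    · have hval : nearTerm (3 * znorm k) (k - h) = (znorm (k - h) ^ 2)⁻¹ :=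
        if_pos ⟨hkh, by linarith⟩
      calc (znorm h ^ 2)⁻¹ * (znorm (k - h) ^ 2)⁻¹
          ≤ 4 * (znorm k ^ 2)⁻¹ * (znorm (k - h) ^ 2)⁻¹ := by
            gcongr; exact inv_sq_le_four_mul_inv_sq (by linarith) hmid
        _ ≤ _ := by
            rw [hval]
            exact le_add_of_le_of_nonneg (by gcongr; exact le_add_of_nonneg_left hnear) (by positivity)
    · have hval : nearTerm (3 * znorm k) h = (znorm h ^ 2)⁻¹ := if_pos ⟨h0, by linarith⟩
      calc (znorm h ^ 2)⁻¹ * (znorm (k - h) ^ 2)⁻¹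
          ≤ (znorm h ^ 2)⁻¹ * (4 * (znorm k ^ 2)⁻¹) := by
            gcongr; exact inv_sq_le_four_mul_inv_sq (by linarith) (by linarith)
        _ ≤ _ := by
            rw [hval, mul_comm]
            exact le_add_of_le_of_nonneg (by gcongr; exact le_add_of_nonneg_right hnear') (by positivity)
  · have hval : farTerm (znorm k) h = (znorm h ^ 4)⁻¹ := if_pos (by linarith)
    calc (znorm h ^ 2)⁻¹ * (znorm (k - h) ^ 2)⁻¹
        ≤ (znorm h ^ 2)⁻¹ * (4 * (znorm h ^ 2)⁻¹) := by
          gcongr; exact inv_sq_le_four_mul_inv_sq (by linarith) (by linarith)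
      _ = 4 * farTerm (znorm k) h := by rw [hval]; ring
      _ ≤ _ := le_add_of_nonneg_left (by positivity)

lemma summable_convTerm_and_tsum_le {k : ℤ × ℤ} (hk : k ≠ 0) :
    Summable (convTerm k) ∧
      ∑' h, convTerm k h ≤ (64 * (1 + Real.log (3 * znorm k)) + 256) / znorm k ^ 2 := by
  have hK : 1 ≤ znorm k := one_le_znorm hk
  obtain ⟨hns, hnt⟩ := summable_nearTerm_and_tsum_le (R := 3 * znorm k) (by linarith)
  obtain ⟨hfs, hft⟩ := summable_farTerm_and_tsum_le (K := znorm k) (by linarith)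
  have hns' : Summable fun h => nearTerm (3 * znorm k) (k - h) := by
    simpa only [Function.comp_def, Equiv.subLeft_apply] using (Equiv.subLeft k).summable_iff.mpr hns
  have hnt' : ∑' h, nearTerm (3 * znorm k) (k - h) = ∑' h, nearTerm (3 * znorm k) h := by
    simpa only [Equiv.subLeft_apply] using (Equiv.subLeft k).tsum_eq (nearTerm (3 * znorm k))
  have hms : Summable fun h => 4 * (znorm k ^ 2)⁻¹ *
      (nearTerm (3 * znorm k) h + nearTerm (3 * znorm k) (k - h)) + 4 * farTerm (znorm k) h :=
    ((hns.add hns').mul_left _).add (hfs.mul_left 4)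
  have hcs : Summable (convTerm k) := hms.of_nonneg_of_le (convTerm_nonneg k) (convTerm_le hk)
  refine ⟨hcs, (hcs.tsum_le_tsum (convTerm_le hk) hms).trans ?_⟩
  rw [Summable.tsum_add ((hns.add hns').mul_left _) (hfs.mul_left 4), tsum_mul_left, tsum_mul_left,
    hns.tsum_add hns', hnt']
  calc 4 * (znorm k ^ 2)⁻¹ * (∑' h, nearTerm (3 * znorm k) h + ∑' h, nearTerm (3 * znorm k) h)
        + 4 * ∑' h, farTerm (znorm k) h
      ≤ 4 * (znorm k ^ 2)⁻¹ * (8 * (1 + Real.log (3 * znorm k)) + 8 * (1 + Real.log (3 * znorm k)))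
        + 4 * (64 / znorm k ^ 2) := by gcongr
    _ = (64 * (1 + Real.log (3 * znorm k)) + 256) / znorm k ^ 2 := by ring

/-- the lattice convolution series is bounded by `c log|k| / |k|^2`. -/
theorem lattice_convolution_log_bound :
    ∃ c : ℝ, 0 < c ∧ ∀ k : ℤ × ℤ, 2 ≤ znorm k →
      (Summable fun h : ℤ × ℤ =>
        if h ≠ 0 ∧ h ≠ k then 1 / (znorm h ^ 2 * znorm (k - h) ^ 2) else 0) ∧
      (∑' h : ℤ × ℤ,
        if h ≠ 0 ∧ h ≠ k then 1 / (znorm h ^ 2 * znorm (k - h) ^ 2) else 0)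
        ≤ c * Real.log (znorm k) / znorm k ^ 2 := by
  refine ⟨960, by norm_num, fun k hk => ?_⟩
  have hk0 : k ≠ 0 := by rintro rfl; rw [znorm_zero] at hk; norm_num at hk
  obtain ⟨hs, hle⟩ := summable_convTerm_and_tsum_le hk0
  refine ⟨hs, hle.trans ?_⟩
  have hlog3 : Real.log 3 ≤ 2 := by linarith [Real.log_le_sub_one_of_pos (by norm_num : (0 : ℝ) < 3)]
  have hlog2 : Real.log 2 ≤ Real.log (znorm k) := Real.log_le_log (by norm_num) hk
  rw [Real.log_mul (by norm_num) (by linarith)]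
  gcongr ?_ / _
  linarith [Real.log_two_gt_d9]
end

section
/- For $m \geq 2$, $\int_{1/\sqrt{2}}^{\infty} \frac{1}{m^2 + 4y^2} \cdot \frac{\pi}{y}\, dy \leq \pi \frac{\log(\sqrt{2} m)}{m^2 + 2} + \frac{\pi^2}{4 m^2}$. -/
/-!
On `(1/√2, m]` the factor `1 / (m² + 4y²)` is at most `1 / (m² + 2)`, and `π / y` integrates to
`π log (√2 m)`. On `(m, ∞)` the integrand is at most `π / (4y³)`, whose integral `π / (8m²)` is
below `π² / (4m²)`.
-/

open MeasureTheory Real Set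

noncomputable def tailIntegrand (m y : ℝ) : ℝ := 1 / (m ^ 2 + 4 * y ^ 2) * (π / y)

lemma tailIntegrand_nonneg (m : ℝ) {y : ℝ} (hy : 0 < y) : 0 ≤ tailIntegrand m y := by
  unfold tailIntegrand; positivity

lemma continuousOn_tailIntegrand (m : ℝ) : ContinuousOn (tailIntegrand m) (Ioi 0) := by
  unfold tailIntegrand
  refine ContinuousOn.mul ?_ (continuousOn_const.div continuousOn_id fun y hy => ne_of_gt hy)
  exact continuousOn_const.div (by fun_prop) fun y (hy : 0 < y) => by positivity

lemma tailIntegrand_le_mul_inv {m a y : ℝ} (ha : 0 < a) (hay : a ≤ y) :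
    tailIntegrand m y ≤ π / (m ^ 2 + 4 * a ^ 2) * y⁻¹ := by
  have hy : 0 < y := ha.trans_le hay
  calc tailIntegrand m y ≤ 1 / (m ^ 2 + 4 * a ^ 2) * (π / y) := by
        unfold tailIntegrand; gcongr
    _ = π / (m ^ 2 + 4 * a ^ 2) * y⁻¹ := by ring

lemma tailIntegrand_le_rpow (m : ℝ) {y : ℝ} (hy : 0 < y) :
    tailIntegrand m y ≤ π / 4 * y ^ (-3 : ℝ) := by
  rw [rpow_neg hy.le, show (3 : ℝ) = (3 : ℕ) by norm_num, rpow_natCast]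
  calc tailIntegrand m y = π / (y * (m ^ 2 + 4 * y ^ 2)) := by
        unfold tailIntegrand; field_simp
    _ ≤ π / (4 * y ^ 3) :=
        div_le_div_of_nonneg_left pi_pos.le (by positivity) (by nlinarith [sq_nonneg m])
    _ = π / 4 * (y ^ 3)⁻¹ := by ring

lemma integrableOn_Ioi_tailIntegrand (m : ℝ) {a : ℝ} (ha : 0 < a) :
    IntegrableOn (tailIntegrand m) (Ioi a) := by
  have hdom := (integrableOn_Ioi_rpow_of_lt (by norm_num : (-3 : ℝ) < -1) ha).const_mul (π / 4)
  have hmeas := ((continuousOn_tailIntegrand m).mono (Ioi_subset_Ioi ha.le)).aestronglyMeasurable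
    (μ := volume) measurableSet_Ioi
  refine Integrable.mono' hdom hmeas ?_
  filter_upwards [ae_restrict_mem measurableSet_Ioi] with y hy
  have hy : 0 < y := ha.trans hy
  rw [norm_of_nonneg (tailIntegrand_nonneg m hy)]
  exact tailIntegrand_le_rpow m hy

lemma setIntegral_Ioc_tailIntegrand_le {m a b : ℝ} (ha : 0 < a) (hab : a ≤ b) :
    ∫ y in Ioc a b, tailIntegrand m y ≤ π * log (b / a) / (m ^ 2 + 4 * a ^ 2) := by
  have hpos : ∀ y ∈ uIcc a b, 0 < y := fun y hy => ha.trans_le (uIcc_of_le hab ▸ hy).1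
  rw [← intervalIntegral.integral_of_le hab]
  calc ∫ y in a..b, tailIntegrand m y ≤ ∫ y in a..b, π / (m ^ 2 + 4 * a ^ 2) * y⁻¹ :=
        intervalIntegral.integral_mono_on hab
          ((continuousOn_tailIntegrand m).mono fun y hy => hpos y hy).intervalIntegrable
          ((continuousOn_inv₀.mono fun y hy => (hpos y hy).ne').intervalIntegrable.const_mul _)
          fun y hy => tailIntegrand_le_mul_inv ha hy.1
    _ = π * log (b / a) / (m ^ 2 + 4 * a ^ 2) := by
        rw [intervalIntegral.integral_const_mul, integral_inv_of_pos ha (ha.trans_le hab)]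
        ring

lemma setIntegral_Ioi_tailIntegrand_le (m : ℝ) {b : ℝ} (hb : 0 < b) :
    ∫ y in Ioi b, tailIntegrand m y ≤ π / (8 * b ^ 2) := by
  calc ∫ y in Ioi b, tailIntegrand m y ≤ ∫ y in Ioi b, π / 4 * y ^ (-3 : ℝ) :=
        setIntegral_mono_on (integrableOn_Ioi_tailIntegrand m hb)
          ((integrableOn_Ioi_rpow_of_lt (by norm_num) hb).const_mul _) measurableSet_Ioi
          fun y hy => tailIntegrand_le_rpow m (hb.trans hy)
    _ = π / (8 * b ^ 2) := by
        rw [integral_const_mul, integral_Ioi_rpow_of_lt (by norm_num) hb]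
        norm_num
        ring

/-- tail integral estimate. -/
theorem tail_integral_estimate (m : ℝ) (hm : 2 ≤ m) :
    (∫ y in Set.Ioi (1 / Real.sqrt 2), (1 / (m^2 + 4 * y^2)) * (π / y))
      ≤ π * Real.log (Real.sqrt 2 * m) / (m^2 + 2) + π^2 / (4 * m^2) := by
  set a := 1 / √2
  have ha : 0 < a := by positivity
  have ha_sq : a ^ 2 = 1 / 2 := by rw [div_pow, one_pow, sq_sqrt zero_le_two]
  have ham : a ≤ m := by
    have : a ≤ 1 := by rw [div_le_one (by positivity)]; exact one_le_sqrt.mpr one_le_two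
    linarith
  have hm0 : 0 < m := by linarith
  change ∫ y in Ioi a, tailIntegrand m y ≤ _
  rw [← Ioc_union_Ioi_eq_Ioi ham, setIntegral_union (Ioc_disjoint_Ioi le_rfl) measurableSet_Ioi
    ((integrableOn_Ioi_tailIntegrand m ha).mono_set Ioc_subset_Ioi_self)
    (integrableOn_Ioi_tailIntegrand m hm0)]
  gcongr
  · have h := setIntegral_Ioc_tailIntegrand_le (m := m) ha ham
    rwa [ha_sq, show m / a = √2 * m by rw [div_div_eq_mul_div, div_one, mul_comm],
      show (4 : ℝ) * (1 / 2) = 2 by norm_num] at h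
  · calc _ ≤ π / (8 * m ^ 2) := setIntegral_Ioi_tailIntegrand_le m hm0
      _ ≤ π ^ 2 / (4 * m ^ 2) := by
        rw [div_le_div_iff₀ (by positivity) (by positivity)]
        nlinarith [pi_gt_three, mul_pos pi_pos (pow_pos hm0 2)]
end
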